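/- For d ≥ 2, define κ_d(j,n) = [Γ(d-1)/Γ((d-1)/2)²] · Γ((d-1+j-n)/2)·Γ((d-1+j+n)/2)·j! / [Γ((j-n+2)/2)·Γ((j+n+2)/2)·Γ(d-1+j)]. Then for all j, n ≥ 1: κ_{d+2}(2j, 2n) = (d/(d-1)) · [(d-1+2j)/(d+2j) - (2n)²/((d-1+2j)(d+2j))] · κ_d(2j, 2n). -/

import Mathlib

open Real

/-! Passing from `d` to `d + 2` raises by one every Gamma argument that involves `d`, so
`Γ(x + 1) = x Γ(x)` turns the ratio `κ_{d+2}(j, n) / κ_d(j, n)` into a rational function of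
`d, j, n`. When `n > j` both sides vanish: `(2j - 2n + 2) / 2` is a pole of `Γ`, where Mathlib's
`Real.Gamma` is `0`, so the division by it in `kappa` gives `0`. -/

/-- The coefficients `κ_d(j, n)`, defined for real `d, j, n` via the Gamma function. -/
noncomputable def kappa (d j n : ℝ) : ℝ :=
  (Real.Gamma (d - 1) / (Real.Gamma ((d - 1) / 2)) ^ 2) *
    (Real.Gamma ((d - 1 + j - n) / 2) * Real.Gamma ((d - 1 + j + n) / 2) * Real.Gamma (j + 1)) /
      (Real.Gamma ((j - n + 2) / 2) * Real.Gamma ((j + n + 2) / 2) * Real.Gamma (d - 1 + j))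

theorem kappa_add_two {d j n : ℝ} (hd₀ : d ≠ 0) (hd : d ≠ 1) (hminus : d - 1 + j - n ≠ 0)
    (hplus : d - 1 + j + n ≠ 0) (hj₁ : d - 1 + j ≠ 0) (hj₂ : d + j ≠ 0) :
    kappa (d + 2) j n =
      d / (d - 1) * ((d - 1 + j - n) * (d - 1 + j + n) / ((d - 1 + j) * (d + j))) *
        kappa d j n := by
  have hd' : d - 1 ≠ 0 := sub_ne_zero.mpr hd
  have shift {x y : ℝ} (hxy : y = x + 1) (hx : x ≠ 0) : Gamma y = x * Gamma x := by
    rw [hxy, Gamma_add_one hx]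
  rw [kappa, kappa, shift (y := (d + 2 - 1) / 2) (x := (d - 1) / 2) (by ring) (by simpa using hd'),
    shift (y := (d + 2 - 1 + j - n) / 2) (x := (d - 1 + j - n) / 2) (by ring)
      (by simpa using hminus),
    shift (y := (d + 2 - 1 + j + n) / 2) (x := (d - 1 + j + n) / 2) (by ring)
      (by simpa using hplus),
    shift (y := d + 2 - 1 + j) (x := d + j) (by ring) hj₂,
    shift (y := d + j) (x := d - 1 + j) (by ring) hj₁,
    shift (y := d + 2 - 1) (x := d) (by ring) hd₀,
    shift (y := d) (x := d - 1) (by ring) hd']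
  field_simp

theorem kappa_two_mul_eq_zero_of_lt (d : ℝ) {j n : ℕ} (h : j < n) :
    kappa d (2 * j) (2 * n) = 0 := by
  have hGamma : Gamma ((2 * j - 2 * n + 2) / 2) = 0 := by
    have : ((2 * j - 2 * n + 2) / 2 : ℝ) = -((n - (j + 1) : ℕ) : ℝ) := by
      rw [Nat.cast_sub h]; push_cast; ring
    rw [this, Gamma_neg_nat_eq_zero]
  rw [kappa, hGamma, zero_mul, zero_mul, div_zero]

theorem stmt_14_general (d : ℕ) (hd : 2 ≤ d) (j n : ℕ) :
    kappa ((d : ℝ) + 2) (2 * j) (2 * n) =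
      ((d : ℝ) / ((d : ℝ) - 1)) *
        (((d : ℝ) - 1 + 2 * j) / ((d : ℝ) + 2 * j) -
          (2 * (n : ℝ)) ^ 2 / (((d : ℝ) - 1 + 2 * j) * ((d : ℝ) + 2 * j))) *
        kappa (d : ℝ) (2 * j) (2 * n) := by
  rcases lt_or_ge j n with hjn | hnj
  · rw [kappa_two_mul_eq_zero_of_lt _ hjn, kappa_two_mul_eq_zero_of_lt _ hjn, mul_zero]
  have hd₁ : (1 : ℝ) < d := by exact_mod_cast hd
  have hnj : (n : ℝ) ≤ j := by exact_mod_cast hnj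
  have hj : (0 : ℝ) < d - 1 + 2 * j := by positivity
  rw [kappa_add_two (by positivity) hd₁.ne' (by linarith) (by positivity) hj.ne' (by positivity)]
  congr 2
  field_simp
  ring

theorem stmt_14 (d : ℕ) (hd : 2 ≤ d) (j n : ℕ) (hj : 1 ≤ j) (hn : 1 ≤ n) :
    kappa ((d : ℝ) + 2) (2 * j) (2 * n) =
      ((d : ℝ) / ((d : ℝ) - 1)) *
        (((d : ℝ) - 1 + 2 * j) / ((d : ℝ) + 2 * j) -
          (2 * (n : ℝ)) ^ 2 / (((d : ℝ) - 1 + 2 * j) * ((d : ℝ) + 2 * j))) *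
        kappa (d : ℝ) (2 * j) (2 * n) :=
  stmt_14_general d hd j n
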